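/- Let R be a commutative ring, M and M' be R-modules, and φ: M ⊕ M' → N a polynomial law. Then φ has a unique decomposition φ = Σ_{i,j≥0} φ_{(i,j)} where each φ_{(i,j)}: M ⊕ M' → N is a bihomogeneous polynomial law of degree (i,j), meaning φ_{(i,j),A}(a·m, b·m') = a^i b^j φ_{(i,j),A}(m,m') for all R-algebras A, a,b ∈ A, m ∈ A⊗M, m' ∈ A⊗M'. Moreover, if φ is homogeneous of degree d, then φ_{(i,j)} = 0 whenever i+j ≠ d. -/

import Mathlib

open scoped TensorProduct

universe u

/-- A polynomial law `M → N` over `R`: a family of maps `A ⊗[R] M → A ⊗[R] N`, one for every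
commutative `R`-algebra `A`, commuting with base change along all `R`-algebra homomorphisms. -/
structure PolyLaw (R : Type u) [CommRing R] (M N : Type u)
    [AddCommGroup M] [Module R M] [AddCommGroup N] [Module R N] : Type (u + 1) where
  toFun : ∀ (A : Type u) [CommRing A] [Algebra R A], A ⊗[R] M → A ⊗[R] N
  isCompat : ∀ {A B : Type u} [CommRing A] [Algebra R A] [CommRing B] [Algebra R B]
      (φ : A →ₐ[R] B) (x : A ⊗[R] M),
      LinearMap.rTensor N φ.toLinearMap (toFun A x) = toFun B (LinearMap.rTensor M φ.toLinearMap x)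

namespace PolyLaw

variable {R : Type u} [CommRing R] {M N P : Type u}
  [AddCommGroup M] [Module R M] [AddCommGroup N] [Module R N] [AddCommGroup P] [Module R P]

theorem ext' {f g : PolyLaw R M N}
    (h : ∀ (A : Type u) [CommRing A] [Algebra R A] (x : A ⊗[R] M), f.toFun A x = g.toFun A x) :
    f = g := by
  cases f; cases g
  simp only [mk.injEq]
  funext A instA instB x
  exact h A x

/-- A polynomial law is homogeneous of degree `d` if `φ_A (a • m) = a ^ d • φ_A m` always. -/
def IsHomogeneous (f : PolyLaw R M N) (d : ℕ) : Prop :=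
  ∀ (A : Type u) [CommRing A] [Algebra R A] (a : A) (x : A ⊗[R] M),
    f.toFun A (a • x) = a ^ d • f.toFun A x

/-- The polynomial law induced by a linear map. -/
noncomputable def ofLinear (ψ : M →ₗ[R] N) : PolyLaw R M N where
  toFun A _ _ := LinearMap.lTensor A ψ
  isCompat φ x := by
    show LinearMap.rTensor N φ.toLinearMap (LinearMap.lTensor _ ψ x)
      = LinearMap.lTensor _ ψ (LinearMap.rTensor M φ.toLinearMap x)
    rw [← LinearMap.comp_apply, ← LinearMap.comp_apply,
      LinearMap.rTensor_comp_lTensor, LinearMap.lTensor_comp_rTensor]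

/-- Composition of polynomial laws. -/
def comp (g : PolyLaw R N P) (f : PolyLaw R M N) : PolyLaw R M P where
  toFun A _ _ x := g.toFun A (f.toFun A x)
  isCompat φ x := by rw [g.isCompat φ, f.isCompat φ]

/-- Translation by an element `u : N`, as a polynomial law `N → N`. -/
noncomputable def translation (u : N) : PolyLaw R N N where
  toFun A _ _ x := x + (1 : A) ⊗ₜ[R] u
  isCompat φ x := by
    simp [map_add, LinearMap.rTensor_tmul, map_one]

end PolyLaw

namespace PolyLaw

variable {R : Type u} [CommRing R] {M N : Type u}
  [AddCommGroup M] [Module R M] [AddCommGroup N] [Module R N]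

noncomputable instance : Zero (PolyLaw R M N) :=
  ⟨{ toFun := fun A _ _ _ => 0, isCompat := fun φ x => by simp }⟩

noncomputable instance : Add (PolyLaw R M N) :=
  ⟨fun f g =>
    { toFun := fun A _ _ x => f.toFun A x + g.toFun A x
      isCompat := fun φ x => by simp [map_add, f.isCompat, g.isCompat] }⟩

noncomputable instance : Neg (PolyLaw R M N) :=
  ⟨fun f =>
    { toFun := fun A _ _ x => - f.toFun A x
      isCompat := fun φ x => by simp [map_neg, f.isCompat] }⟩

noncomputable instance : SMul R (PolyLaw R M N) :=
  ⟨fun r f =>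
    { toFun := fun A _ _ x => r • f.toFun A x
      isCompat := fun φ x => by simp [map_smul, f.isCompat] }⟩

@[simp] lemma zero_toFun (A : Type u) [CommRing A] [Algebra R A] (x : A ⊗[R] M) :
    (0 : PolyLaw R M N).toFun A x = 0 := rfl

@[simp] lemma add_toFun (f g : PolyLaw R M N) (A : Type u) [CommRing A] [Algebra R A]
    (x : A ⊗[R] M) : (f + g).toFun A x = f.toFun A x + g.toFun A x := rfl

@[simp] lemma neg_toFun (f : PolyLaw R M N) (A : Type u) [CommRing A] [Algebra R A]
    (x : A ⊗[R] M) : (-f).toFun A x = - f.toFun A x := rfl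

@[simp] lemma smul_toFun (r : R) (f : PolyLaw R M N) (A : Type u) [CommRing A] [Algebra R A]
    (x : A ⊗[R] M) : (r • f).toFun A x = r • f.toFun A x := rfl

noncomputable instance : AddCommGroup (PolyLaw R M N) where
  add_assoc a b c := ext' (by intros; simp [add_assoc])
  zero_add a := ext' (by intros; simp)
  add_zero a := ext' (by intros; simp)
  add_comm a b := ext' (by intros; simp [add_comm])
  neg_add_cancel a := ext' (by intros; simp)
  nsmul := nsmulRec
  zsmul := zsmulRec

noncomputable instance : Module R (PolyLaw R M N) where
  one_smul f := ext' (by intros; simp)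
  mul_smul r s f := ext' (by intros; simp [mul_smul])
  smul_zero r := ext' (by intros; simp)
  smul_add r f g := ext' (by intros; simp)
  add_smul r s f := ext' (by intros; simp [add_smul])
  zero_smul f := ext' (by intros; simp)

lemma rTensor_eq_algMap {A B : Type u} [CommRing A] [Algebra R A] [CommRing B] [Algebra R B]
    (φ : A →ₐ[R] B) (x : A ⊗[R] R) :
    LinearMap.rTensor R φ.toLinearMap x = Algebra.TensorProduct.map φ (AlgHom.id R R) x := by
  induction x using TensorProduct.induction_on with
  | zero => simp
  | tmul a r => simp
  | add x y hx hy => simp [map_add, hx, hy]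

noncomputable instance : One (PolyLaw R M R) :=
  ⟨{ toFun := fun A _ _ _ => 1
     isCompat := fun φ x => by rw [rTensor_eq_algMap, map_one] }⟩

noncomputable instance : Mul (PolyLaw R M R) :=
  ⟨fun f g =>
    { toFun := fun A _ _ x => f.toFun A x * g.toFun A x
      isCompat := fun φ x => by
        rw [rTensor_eq_algMap, map_mul, ← rTensor_eq_algMap, ← rTensor_eq_algMap,
          f.isCompat, g.isCompat] }⟩

@[simp] lemma one_toFun (A : Type u) [CommRing A] [Algebra R A] (x : A ⊗[R] M) :
    (1 : PolyLaw R M R).toFun A x = 1 := rfl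

@[simp] lemma mul_toFun (f g : PolyLaw R M R) (A : Type u) [CommRing A] [Algebra R A]
    (x : A ⊗[R] M) : (f * g).toFun A x = f.toFun A x * g.toFun A x := rfl

noncomputable instance : CommRing (PolyLaw R M R) :=
  { (inferInstance : AddCommGroup (PolyLaw R M R)) with
    mul := (· * ·)
    one := 1
    mul_assoc := fun a b c => ext' (by intros; simp [mul_assoc])
    one_mul := fun a => ext' (by intros; simp)
    mul_one := fun a => ext' (by intros; simp)
    left_distrib := fun a b c => ext' (by intros; simp [mul_add])
    right_distrib := fun a b c => ext' (by intros; simp [add_mul])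
    mul_comm := fun a b => ext' (by intros; simp [mul_comm])
    zero_mul := fun a => ext' (by intros; simp)
    mul_zero := fun a => ext' (by intros; simp) }

noncomputable instance : Algebra R (PolyLaw R M R) :=
  Algebra.ofModule (fun r x y => ext' (by intros; simp [smul_mul_assoc]))
    (fun r x y => ext' (by intros; simp [mul_smul_comm]))

end PolyLaw

open PolyLaw

variable (R : Type u) [CommRing R] (M M' N : Type u)
  [AddCommGroup M] [Module R M] [AddCommGroup M'] [Module R M']
  [AddCommGroup N] [Module R N]

/-- A polynomial law `M ⊕ M' → N` is bihomogeneous of degree `(i, j)` if scaling the `M`-component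
by `a` and the `M'`-component by `b` scales the value by `a^i * b^j`. -/
def IsBihomogeneous (c : PolyLaw R (M × M') N) (i j : ℕ) : Prop :=
  ∀ (A : Type u) [CommRing A] [Algebra R A] (a b : A) (x : A ⊗[R] (M × M')),
    c.toFun A ((TensorProduct.prodRight R R A M M').symm
        (a • (TensorProduct.prodRight R R A M M' x).1,
         b • (TensorProduct.prodRight R R A M M' x).2)) =
      (a ^ i * b ^ j) • c.toFun A x

/-- The property of being a (locally finite) bihomogeneous decomposition of `φ`. -/
def IsBihomogeneousDecomposition (φ : PolyLaw R (M × M') N)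
    (c : ℕ × ℕ → PolyLaw R (M × M') N) : Prop :=
  (∀ k : ℕ × ℕ, IsBihomogeneous R M M' N (c k) k.1 k.2) ∧
    ∀ (A : Type u) [CommRing A] [Algebra R A] (x : A ⊗[R] (M × M')),
      {k : ℕ × ℕ | (c k).toFun A x ≠ 0}.Finite ∧
        φ.toFun A x = ∑ᶠ k : ℕ × ℕ, (c k).toFun A x

/-!
The `(i, j)`-component of `φ` at `x = (m, m')` over `A` is the coefficient of `X₀^i X₁^j` in the
value of `φ` at the universal point `(X₀ • m, X₁ • m')` over `A[X₀, X₁]`: naturality along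
`Xᵢ ↦ 1` shows that these components sum to `φ`, and naturality along `X₀ ↦ a X₀, X₁ ↦ b X₁` that
they are bihomogeneous. Conversely, for any bihomogeneous decomposition `c` the value of `φ` at the
universal point is `∑ X₀^i X₁^j c_{(i,j)}(x)`, which pins `c` down. If `φ` is homogeneous of
degree `d`, evaluating `φ` at `(X₀X₁ • m, X₁ • m') = X₁ • (X₀ • m, m')` in the two ways gives
`∑ X₀^i X₁^(i+j) c_{(i,j)}(x) = ∑ X₀^i X₁^d c_{(i,j)}(x)`, so `c_{(i,j)} = 0` unless `i + j = d`.
-/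

open TensorProduct

namespace MvPolynomial

section Tensor

variable {R S T N σ ι : Type*} [CommSemiring R] [CommSemiring S] [Algebra R S]
  [CommSemiring T] [Algebra R T] [AddCommMonoid N] [Module R N]

variable (σ) in
noncomputable def CAlgHom : S →ₐ[R] MvPolynomial σ S := IsScalarTower.toAlgHom R S _

@[simp] lemma CAlgHom_apply (a : S) : CAlgHom (R := R) σ a = C a := rfl

noncomputable def rTensor : MvPolynomial σ S ⊗[R] N ≃ₗ[S] (σ →₀ ℕ) →₀ (S ⊗[R] N) :=
  by classical exact
    (AlgebraTensorModule.congr (AddMonoidAlgebra.coeffLinearEquiv S) (LinearEquiv.refl R N)) ≪≫ₗ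
      finsuppLeft R S S N (σ →₀ ℕ)

lemma rTensor_tmul_apply (p : MvPolynomial σ S) (n : N) (d : σ →₀ ℕ) :
    rTensor (p ⊗ₜ[R] n) d = coeff d p ⊗ₜ[R] n := by
  classical
  simp [rTensor, coeff]

lemma rTensor_monomial_tmul (e : σ →₀ ℕ) (s : S) (n : N) :
    rTensor (monomial e s ⊗ₜ[R] n) = Finsupp.single e (s ⊗ₜ[R] n) := by
  classical
  ext d
  simp only [rTensor_tmul_apply, coeff_monomial, Finsupp.single_apply]
  split_ifs <;> simp

lemma rTensor_monomial_one_smul_rTensor_CAlgHom (e : σ →₀ ℕ) (v : S ⊗[R] N) :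
    rTensor (monomial e (1 : S) • (CAlgHom σ).toLinearMap.rTensor N v) = Finsupp.single e v := by
  induction v using TensorProduct.induction_on with
  | zero => simp
  | tmul a n =>
    rw [LinearMap.rTensor_tmul, AlgHom.toLinearMap_apply, CAlgHom_apply, smul_tmul', smul_eq_mul,
      mul_comm, C_mul_monomial, mul_one, rTensor_monomial_tmul]
  | add u v hu hv => rw [map_add, smul_add, map_add, hu, hv, Finsupp.single_add]

lemma rTensor_finsum_monomial_one_smul (e : ι → σ →₀ ℕ) {v : ι → S ⊗[R] N}
    (hv : (Function.support v).Finite) :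
    rTensor (∑ᶠ k, monomial (e k) (1 : S) • (CAlgHom σ).toLinearMap.rTensor N (v k)) =
      ∑ᶠ k, Finsupp.single (e k) (v k) := by
  rw [map_finsum rTensor (hv.subset fun k hk h => hk (by simp [h]))]
  simp_rw [rTensor_monomial_one_smul_rTensor_CAlgHom]

lemma rTensor_finsum_monomial_one_smul_apply (e : ι → σ →₀ ℕ) {v : ι → S ⊗[R] N}
    (hv : (Function.support v).Finite) (d : σ →₀ ℕ) :
    rTensor (∑ᶠ k, monomial (e k) (1 : S) • (CAlgHom σ).toLinearMap.rTensor N (v k)) d =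
      ∑ᶠ k, Finsupp.single (e k) (v k) d := by
  rw [rTensor_finsum_monomial_one_smul e hv, ← Finsupp.applyAddHom_apply,
    map_finsum _ (hv.subset fun k hk h => hk (by simp [h]))]
  rfl

lemma rTensor_finsum_monomial_one_smul_apply_of_injective {e : ι → σ →₀ ℕ}
    (he : Function.Injective e) {v : ι → S ⊗[R] N} (hv : (Function.support v).Finite) (k : ι) :
    rTensor (∑ᶠ k, monomial (e k) (1 : S) • (CAlgHom σ).toLinearMap.rTensor N (v k)) (e k) =
      v k := by
  rw [rTensor_finsum_monomial_one_smul_apply e hv,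
    finsum_eq_single _ k fun k' hk' => Finsupp.single_eq_of_ne (he.ne hk'.symm),
    Finsupp.single_eq_same]

lemma rTensor_finsum_monomial_one_smul_apply_of_forall_ne {e : ι → σ →₀ ℕ} {d : σ →₀ ℕ}
    (he : ∀ k, e k ≠ d) {v : ι → S ⊗[R] N} (hv : (Function.support v).Finite) :
    rTensor (∑ᶠ k, monomial (e k) (1 : S) • (CAlgHom σ).toLinearMap.rTensor N (v k)) d = 0 := by
  rw [rTensor_finsum_monomial_one_smul_apply e hv]
  exact finsum_eq_zero_of_forall_eq_zero fun k => Finsupp.single_eq_of_ne (he k).symm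

lemma rTensor_rTensor_mapAlgHom (ψ : S →ₐ[R] T) (z : MvPolynomial σ S ⊗[R] N) (d : σ →₀ ℕ) :
    rTensor ((mapAlgHom ψ).toLinearMap.rTensor N z) d = ψ.toLinearMap.rTensor N (rTensor z d) := by
  induction z using TensorProduct.induction_on with
  | zero => simp
  | tmul p n => simp [rTensor_tmul_apply, mapAlgHom_apply, coeff_map]
  | add u v hu hv => simp only [map_add, Finsupp.add_apply, hu, hv]

lemma coeff_aeval_C_mul_X (w : σ → S) (p : MvPolynomial σ S) (d : σ →₀ ℕ) :
    coeff d (aeval (fun i => C (w i) * X i) p) = (d.prod fun i n => w i ^ n) * coeff d p := by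
  classical
  induction p using MvPolynomial.induction_on' with
  | monomial e a =>
    have : aeval (fun i => C (w i) * X i) (monomial e a) =
        monomial e (a * e.prod fun i n => w i ^ n) := by
      rw [aeval_monomial, monomial_eq, C_mul, mul_assoc]
      simp only [mul_pow, Finsupp.prod_mul, ← C_pow, map_finsuppProd, algebraMap_eq]
    rw [this, coeff_monomial, coeff_monomial]
    split_ifs with h
    · subst h; ring
    · ring
  | add p q hp hq => rw [map_add, coeff_add, hp, hq, coeff_add, mul_add]

lemma rTensor_rTensor_aeval_C_mul_X (w : σ → S) (z : MvPolynomial σ S ⊗[R] N) (d : σ →₀ ℕ) :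
    rTensor (((aeval fun i => C (w i) * X i).restrictScalars R).toLinearMap.rTensor N z) d =
      (d.prod fun i n => w i ^ n) • rTensor z d := by
  induction z using TensorProduct.induction_on with
  | zero => simp
  | tmul p n =>
    simp only [LinearMap.rTensor_tmul, AlgHom.toLinearMap_apply, AlgHom.coe_restrictScalars',
      rTensor_tmul_apply, coeff_aeval_C_mul_X, smul_tmul', smul_eq_mul]
  | add u v hu hv => simp only [map_add, Finsupp.add_apply, hu, hv, smul_add]

lemma rTensor_aeval_one (z : MvPolynomial σ S ⊗[R] N) :
    ((aeval fun _ => (1 : S)).restrictScalars R).toLinearMap.rTensor N z = ∑ᶠ d, rTensor z d := by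
  rw [finsum_eq_finsetSum_of_support_subset _ (Finsupp.fun_support_eq _).subset]
  change _ = (rTensor z).sum fun _ v => v
  induction z using TensorProduct.induction_on with
  | zero => simp
  | tmul p n =>
    induction p using MvPolynomial.induction_on' with
    | monomial e a => simp [rTensor_monomial_tmul, aeval_monomial]
    | add p q hp hq =>
      rw [add_tmul, map_add, hp, hq, map_add, Finsupp.sum_add_index' (by simp) (by simp)]
  | add u v hu hv => rw [map_add, hu, hv, map_add, Finsupp.sum_add_index' (by simp) (by simp)]

end Tensor

end MvPolynomial

open MvPolynomial

section ScaleProd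

variable {R M M'}
variable {A B : Type*} [CommSemiring A] [Algebra R A] [CommSemiring B] [Algebra R B]

lemma rTensor_algHom_smul {P : Type*} [AddCommMonoid P] [Module R P] (ψ : A →ₐ[R] B) (s : A)
    (z : A ⊗[R] P) : ψ.toLinearMap.rTensor P (s • z) = ψ s • ψ.toLinearMap.rTensor P z := by
  induction z using TensorProduct.induction_on with
  | zero => simp
  | tmul a p => simp [smul_tmul']
  | add u v hu hv => simp [smul_add, hu, hv]

lemma prodRight_rTensor (ψ : A →ₐ[R] B) (x : A ⊗[R] (M × M')) :
    prodRight R R B M M' (ψ.toLinearMap.rTensor (M × M') x) =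
      (ψ.toLinearMap.rTensor M (prodRight R R A M M' x).1,
        ψ.toLinearMap.rTensor M' (prodRight R R A M M' x).2) := by
  induction x using TensorProduct.induction_on with
  | zero => simp [Prod.zero_eq_mk]
  | tmul a m => rfl
  | add u v hu hv => simp [hu, hv]

noncomputable def scaleProd (a b : A) (x : A ⊗[R] (M × M')) : A ⊗[R] (M × M') :=
  (prodRight R R A M M').symm (a • (prodRight R R A M M' x).1, b • (prodRight R R A M M' x).2)

lemma rTensor_scaleProd (ψ : A →ₐ[R] B) (a b : A) (x : A ⊗[R] (M × M')) :
    ψ.toLinearMap.rTensor (M × M') (scaleProd a b x) =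
      scaleProd (ψ a) (ψ b) (ψ.toLinearMap.rTensor (M × M') x) := by
  rw [scaleProd, scaleProd, LinearEquiv.eq_symm_apply, prodRight_rTensor, prodRight_rTensor]
  simp [rTensor_algHom_smul]

lemma scaleProd_scaleProd (a b a' b' : A) (x : A ⊗[R] (M × M')) :
    scaleProd a b (scaleProd a' b' x) = scaleProd (a * a') (b * b') x := by
  simp [scaleProd, mul_smul]

lemma scaleProd_self (a : A) (x : A ⊗[R] (M × M')) : scaleProd a a x = a • x := by
  rw [scaleProd, LinearEquiv.symm_apply_eq]
  exact (map_smul (prodRight R A A M M') a x).symm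

lemma scaleProd_one_one (x : A ⊗[R] (M × M')) : scaleProd 1 1 x = x := by
  rw [scaleProd_self, one_smul]

end ScaleProd

section UniversalPoint

variable {R M M'}
variable {A B : Type*} [CommSemiring A] [Algebra R A] [CommSemiring B] [Algebra R B]

noncomputable def universalPoint (x : A ⊗[R] (M × M')) : MvPolynomial (Fin 2) A ⊗[R] (M × M') :=
  scaleProd (X 0) (X 1) ((CAlgHom (Fin 2)).toLinearMap.rTensor (M × M') x)

lemma rTensor_universalPoint (ψ : MvPolynomial (Fin 2) A →ₐ[R] B) (x : A ⊗[R] (M × M')) :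
    ψ.toLinearMap.rTensor (M × M') (universalPoint x) =
      scaleProd (ψ (X 0)) (ψ (X 1))
        ((ψ.comp (CAlgHom (Fin 2))).toLinearMap.rTensor (M × M') x) := by
  rw [universalPoint, rTensor_scaleProd, AlgHom.comp_toLinearMap, LinearMap.rTensor_comp_apply]

lemma rTensor_mapAlgHom_universalPoint (ψ : A →ₐ[R] B) (x : A ⊗[R] (M × M')) :
    (mapAlgHom ψ).toLinearMap.rTensor (M × M') (universalPoint x) =
      universalPoint (ψ.toLinearMap.rTensor (M × M') x) := by
  have : (mapAlgHom ψ).comp (CAlgHom (R := R) (Fin 2)) = (CAlgHom (Fin 2)).comp ψ :=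
    AlgHom.ext fun a => by simp [mapAlgHom_apply]
  rw [rTensor_universalPoint, this, AlgHom.comp_toLinearMap, LinearMap.rTensor_comp_apply,
    universalPoint]
  simp [mapAlgHom_apply]

lemma universalPoint_scaleProd (a b : A) (x : A ⊗[R] (M × M')) :
    universalPoint (scaleProd a b x) =
      ((aeval fun i => C (![a, b] i) * X i).restrictScalars R).toLinearMap.rTensor (M × M')
        (universalPoint x) := by
  have : ((aeval fun i => C (![a, b] i) * X i).restrictScalars R).comp (CAlgHom (Fin 2)) =
      CAlgHom (R := R) (Fin 2) :=
    AlgHom.ext fun a => by simp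
  rw [rTensor_universalPoint, this, universalPoint, rTensor_scaleProd, scaleProd_scaleProd]
  simp [mul_comm]

lemma rTensor_aeval_one_universalPoint (x : A ⊗[R] (M × M')) :
    ((aeval fun _ => (1 : A)).restrictScalars R).toLinearMap.rTensor (M × M') (universalPoint x) =
      x := by
  have : ((aeval fun _ => (1 : A)).restrictScalars R).comp (CAlgHom (Fin 2)) = AlgHom.id R A :=
    AlgHom.ext fun a => by simp
  rw [rTensor_universalPoint, this]
  simp [scaleProd_one_one]

end UniversalPoint

noncomputable def biExponent : ℕ × ℕ ≃ (Fin 2 →₀ ℕ) :=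
  (finTwoArrowEquiv ℕ).symm.trans Finsupp.equivFunOnFinite.symm

lemma X_zero_pow_mul_X_one_pow {A : Type*} [CommSemiring A] (k : ℕ × ℕ) :
    (X 0 : MvPolynomial (Fin 2) A) ^ k.1 * X 1 ^ k.2 = monomial (biExponent k) 1 := by
  rw [X_pow_eq_monomial, X_pow_eq_monomial, monomial_mul, one_mul]
  refine congrArg (monomial · 1) (Finsupp.ext fun i => ?_)
  fin_cases i <;> simp [biExponent]

lemma prod_biExponent {A : Type*} [CommMonoid A] (a b : A) (k : ℕ × ℕ) :
    ((biExponent k).prod fun i n => ![a, b] i ^ n) = a ^ k.1 * b ^ k.2 := by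
  rw [Finsupp.prod_fintype _ _ fun i => by simp, Fin.prod_univ_two]
  simp [biExponent]

section Decomposition

variable {R M M' N}

lemma IsBihomogeneous.toFun_scaleProd {c : PolyLaw R (M × M') N} {i j : ℕ}
    (hc : IsBihomogeneous R M M' N c i j) {A : Type u} [CommRing A] [Algebra R A] (a b : A)
    (x : A ⊗[R] (M × M')) : c.toFun A (scaleProd a b x) = (a ^ i * b ^ j) • c.toFun A x :=
  hc A a b x

noncomputable def bihomogeneousComponent (φ : PolyLaw R (M × M') N) (k : ℕ × ℕ) :
    PolyLaw R (M × M') N where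
  toFun A _ _ x :=
    MvPolynomial.rTensor (φ.toFun (MvPolynomial (Fin 2) A) (universalPoint x)) (biExponent k)
  isCompat ψ x := by
    rw [← rTensor_rTensor_mapAlgHom, φ.isCompat, rTensor_mapAlgHom_universalPoint]

lemma bihomogeneousComponent_toFun (φ : PolyLaw R (M × M') N) (k : ℕ × ℕ) (A : Type u)
    [CommRing A] [Algebra R A] (x : A ⊗[R] (M × M')) :
    (bihomogeneousComponent φ k).toFun A x =
      MvPolynomial.rTensor (φ.toFun (MvPolynomial (Fin 2) A) (universalPoint x)) (biExponent k) :=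
  rfl

lemma isBihomogeneous_bihomogeneousComponent (φ : PolyLaw R (M × M') N) (k : ℕ × ℕ) :
    IsBihomogeneous R M M' N (bihomogeneousComponent φ k) k.1 k.2 := by
  intro A _ _ a b x
  change (bihomogeneousComponent φ k).toFun A (scaleProd a b x) = _
  rw [bihomogeneousComponent_toFun, bihomogeneousComponent_toFun, universalPoint_scaleProd,
    ← φ.isCompat, rTensor_rTensor_aeval_C_mul_X, prod_biExponent]

lemma isBihomogeneousDecomposition_bihomogeneousComponent (φ : PolyLaw R (M × M') N) :
    IsBihomogeneousDecomposition R M M' N φ (bihomogeneousComponent φ) := by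
  refine ⟨isBihomogeneous_bihomogeneousComponent φ, fun A _ _ x => ⟨?_, ?_⟩⟩
  · exact (MvPolynomial.rTensor (φ.toFun _ (universalPoint x))).support.finite_toSet.preimage
      biExponent.injective.injOn |>.subset fun k hk => Finsupp.mem_support_iff.2 hk
  · calc φ.toFun A x
        = ((aeval fun _ => (1 : A)).restrictScalars R).toLinearMap.rTensor N
            (φ.toFun _ (universalPoint x)) := by
          rw [φ.isCompat, rTensor_aeval_one_universalPoint]
      _ = ∑ᶠ d, MvPolynomial.rTensor (φ.toFun _ (universalPoint x)) d := rTensor_aeval_one _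
      _ = _ := (finsum_comp_equiv biExponent).symm

namespace IsBihomogeneousDecomposition

variable {φ : PolyLaw R (M × M') N} {c : ℕ × ℕ → PolyLaw R (M × M') N}

lemma finite_support (hc : IsBihomogeneousDecomposition R M M' N φ c) (A : Type u) [CommRing A]
    [Algebra R A] (x : A ⊗[R] (M × M')) : (Function.support fun k => (c k).toFun A x).Finite :=
  (hc.2 A x).1

lemma toFun_scaleProd_rTensor (hc : IsBihomogeneousDecomposition R M M' N φ c)
    {A B : Type u} [CommRing A] [Algebra R A] [CommRing B] [Algebra R B] (ψ : A →ₐ[R] B)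
    (a b : B) (x : A ⊗[R] (M × M')) :
    φ.toFun B (scaleProd a b (ψ.toLinearMap.rTensor (M × M') x)) =
      ∑ᶠ k, (a ^ k.1 * b ^ k.2) • ψ.toLinearMap.rTensor N ((c k).toFun A x) := by
  rw [(hc.2 B _).2]
  exact finsum_congr fun k => by rw [(hc.1 k).toFun_scaleProd, (c k).isCompat]

lemma eq_bihomogeneousComponent (hc : IsBihomogeneousDecomposition R M M' N φ c) :
    c = bihomogeneousComponent φ := by
  funext k
  refine ext' fun A _ _ x => ?_
  rw [bihomogeneousComponent_toFun, universalPoint]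
  simp_rw [hc.toFun_scaleProd_rTensor, X_zero_pow_mul_X_one_pow]
  exact (rTensor_finsum_monomial_one_smul_apply_of_injective biExponent.injective
    (hc.finite_support A x) k).symm

lemma eq_zero_of_isHomogeneous (hc : IsBihomogeneousDecomposition R M M' N φ c) {d : ℕ}
    (hφ : φ.IsHomogeneous d) {k : ℕ × ℕ} (hk : k.1 + k.2 ≠ d) : c k = 0 := by
  refine ext' fun A _ _ x => ?_
  let y := (CAlgHom (R := R) (S := A) (Fin 2)).toLinearMap.rTensor (M × M') x
  have hy : scaleProd (X 0 * X 1) (X 1) y =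
      (X 1 : MvPolynomial (Fin 2) A) • scaleProd (X 0) 1 y := by
    rw [← scaleProd_self, scaleProd_scaleProd, mul_comm, mul_one]
  have hbihom : φ.toFun _ (scaleProd (X 0 * X 1) (X 1) y) = ∑ᶠ k' : ℕ × ℕ,
      monomial (biExponent (k'.1, k'.1 + k'.2)) (1 : A) •
        (CAlgHom (Fin 2)).toLinearMap.rTensor N ((c k').toFun A x) := by
    refine (hc.toFun_scaleProd_rTensor _ _ _ x).trans (finsum_congr fun k' => ?_)
    rw [← X_zero_pow_mul_X_one_pow]
    ring_nf
  have hhom : φ.toFun _ (scaleProd (X 0 * X 1) (X 1) y) = ∑ᶠ k' : ℕ × ℕ,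
      monomial (biExponent (k'.1, d)) (1 : A) •
        (CAlgHom (Fin 2)).toLinearMap.rTensor N ((c k').toFun A x) := by
    rw [hy, hφ, hc.toFun_scaleProd_rTensor,
      smul_finsum' _ ((hc.finite_support A x).subset fun k' hk' h => hk' (by simp [h]))]
    refine finsum_congr fun k' => ?_
    rw [smul_smul, ← X_zero_pow_mul_X_one_pow]
    ring_nf
  have hinj : Function.Injective fun k' : ℕ × ℕ => biExponent (k'.1, k'.1 + k'.2) :=
    fun k₁ k₂ h => by
      have := biExponent.injective h
      simp only [Prod.ext_iff] at this
      ext <;> omega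
  have hne (k' : ℕ × ℕ) : biExponent (k'.1, d) ≠ biExponent (k.1, k.1 + k.2) :=
    fun h => hk (congrArg Prod.snd (biExponent.injective h)).symm
  have hcoeff := congrArg (MvPolynomial.rTensor · (biExponent (k.1, k.1 + k.2)))
    (hbihom.symm.trans hhom)
  rwa [rTensor_finsum_monomial_one_smul_apply_of_injective hinj (hc.finite_support A x),
    rTensor_finsum_monomial_one_smul_apply_of_forall_ne hne (hc.finite_support A x)] at hcoeff

end IsBihomogeneousDecomposition

end Decomposition

theorem bihomogeneous_decomposition (φ : PolyLaw R (M × M') N) :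
    (∃! c : ℕ × ℕ → PolyLaw R (M × M') N, IsBihomogeneousDecomposition R M M' N φ c) ∧
    (∀ d : ℕ, φ.IsHomogeneous d →
      ∀ c : ℕ × ℕ → PolyLaw R (M × M') N, IsBihomogeneousDecomposition R M M' N φ c →
        ∀ k : ℕ × ℕ, k.1 + k.2 ≠ d → c k = 0) :=
  ⟨⟨bihomogeneousComponent φ, isBihomogeneousDecomposition_bihomogeneousComponent φ,
      fun _ hc => hc.eq_bihomogeneousComponent⟩,
    fun _ hφ _ hc _ hk => hc.eq_zero_of_isHomogeneous hφ hk⟩
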